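/- Let $n, s, k$ be positive integers with $k \ge 2$, $s \ge 2$, $n \ge k + 7$ and $n \ge (k+1)s - 2k + 2$. If $s > 2$, then the spectral radius of the graph $K_s \vee ((ks-2k+2)K_1 \cup K_{n-(k+1)s+2k-2})$ is at most the spectral radius of the graph $K_2 \vee (2K_1 \cup K_{n-4})$ (the $s=2$ member of this family). -/

import Mathlib

open Classical in
/-- The adjacency matrix of a simple graph, with real entries. -/
noncomputable def adjMat {V : Type} [Fintype V] (G : SimpleGraph V) : Matrix V V ℝ :=
  fun i j => if G.Adj i j then 1 else 0

/-- The largest real eigenvalue of a real matrix. -/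
noncomputable def maxEig {V : Type} [Fintype V] (M : Matrix V V ℝ) : ℝ :=
  sSup {t : ℝ | ∃ x : V → ℝ, x ≠ 0 ∧ M.mulVec x = t • x}

/-- The spectral radius (largest adjacency eigenvalue) of a graph. -/
noncomputable def specRad {V : Type} [Fintype V] (G : SimpleGraph V) : ℝ :=
  maxEig (adjMat G)

/-- The signless Laplacian matrix `Q(G) = D(G) + A(G)`. -/
noncomputable def qMat {V : Type} [Fintype V] [DecidableEq V] (G : SimpleGraph V) :
    Matrix V V ℝ :=
  Matrix.diagonal (fun v => ∑ w, adjMat G v w) + adjMat G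

/-- The signless Laplacian spectral radius of a graph. -/
noncomputable def qRad {V : Type} [Fintype V] [DecidableEq V] (G : SimpleGraph V) : ℝ :=
  maxEig (qMat G)

/-- The graph `K_s ∨ (a K_1 ∪ K_{n-s-a})` on vertex set `Fin n`:
the first `s` vertices form a clique joined to everything, the next `a` vertices are
independent, and the last `n - s - a` vertices form a clique. -/
def modelA (n s a : ℕ) : SimpleGraph (Fin n) where
  Adj i j := i ≠ j ∧ ((i : ℕ) < s ∨ (j : ℕ) < s ∨ (s + a ≤ (i : ℕ) ∧ s + a ≤ (j : ℕ)))
  symm := ⟨by rintro i j ⟨h1, h2⟩; exact ⟨h1.symm, by tauto⟩⟩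
  loopless := ⟨fun i h => h.1 rfl⟩

/-- The graph `s K_1 ∨ (a K_1 ∪ K_{n-s-a})` on vertex set `Fin n`:
the first `s` vertices are independent but joined to everything else, the next `a`
vertices are independent, and the last `n - s - a` vertices form a clique. -/
def modelB (n s a : ℕ) : SimpleGraph (Fin n) where
  Adj i j := i ≠ j ∧ (((i : ℕ) < s ∧ ¬ (j : ℕ) < s) ∨ ((j : ℕ) < s ∧ ¬ (i : ℕ) < s) ∨
    (s + a ≤ (i : ℕ) ∧ s + a ≤ (j : ℕ)))
  symm := ⟨by rintro i j ⟨h1, h2⟩; exact ⟨h1.symm, by tauto⟩⟩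
  loopless := ⟨fun i h => h.1 rfl⟩

/-- `M` is a matching of `G`: a set of pairwise disjoint edges of `G`. -/
def IsMatchingIn {V : Type} (G : SimpleGraph V) (M : Finset (Sym2 V)) : Prop :=
  (↑M : Set (Sym2 V)) ⊆ G.edgeSet ∧
    ∀ e ∈ M, ∀ f ∈ M, e ≠ f → ∀ v : V, ¬(v ∈ e ∧ v ∈ f)

/-- `H` is an `S(k)`-factor of `G`: a spanning subgraph of `G` each of whose connected
components is isomorphic to a star `K_{1,m}` with `1 ≤ m ≤ k`. -/
def IsSkFactor {V : Type} [Fintype V] (G H : SimpleGraph V) (k : ℕ) : Prop :=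
  H ≤ G ∧ ∀ c : H.ConnectedComponent, ∃ m : ℕ, 1 ≤ m ∧ m ≤ k ∧
    Nonempty ((H.induce c.supp) ≃g completeBipartiteGraph Unit (Fin m))

/-! The graph `K_s ∨ (a K_1 ∪ K_{n-s-a})` is equitable for its three vertex blocks, so its
adjacency matrix maps block-constant vectors to block-constant vectors. A positive block-constant
test vector `y` with `A y ≤ (n - 3) y` bounds its spectral radius by `n - 3` (Collatz–Wielandt);
for `a = k s - 2k + 2` this reduces to the polynomial inequality
`a s (s + a - 2) ≤ (a - 2) (n - 2) (n - 3)`. Conversely, `K_2 ∨ (2K_1 ∪ K_{n-4})` has a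
block-constant eigenvector whose eigenvalue is a root of a cubic lying in `[n - 3, n - 2]`. -/

open Matrix

section CollatzWielandt

variable {V : Type} [Fintype V] {M : Matrix V V ℝ}

theorem abs_eigenvalue_le_of_mulVec_le (hM : ∀ i j, 0 ≤ M i j) {y : V → ℝ} (hy : ∀ i, 0 < y i)
    {t : ℝ} (hMy : ∀ i, (M *ᵥ y) i ≤ t * y i) {u : ℝ} {x : V → ℝ} (hx : x ≠ 0)
    (hxu : M *ᵥ x = u • x) : |u| ≤ t := by
  obtain ⟨j, hj⟩ := Function.ne_iff.mp hx
  -- compare with `y` at the coordinate where `|x i| / y i` is largest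
  obtain ⟨i, -, hi⟩ := Finset.univ.exists_max_image (fun i => |x i| / y i) ⟨j, Finset.mem_univ j⟩
  set c := |x i| / y i
  have hx_le : ∀ j, |x j| ≤ c * y j := fun j =>
    (div_le_iff₀ (hy j)).mp (hi j (Finset.mem_univ j))
  have hxi : |x i| = c * y i := (div_mul_cancel₀ _ (hy i).ne').symm
  have hc : 0 < c := pos_of_mul_pos_left ((abs_pos.mpr hj).trans_le (hx_le j)) (hy j).le
  have hxi_pos : 0 < |x i| := by rw [hxi]; exact mul_pos hc (hy i)
  have : |u| * |x i| ≤ t * |x i| :=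
    calc |u| * |x i| = |∑ j, M i j * x j| := by
          rw [← abs_mul, ← smul_eq_mul, ← Pi.smul_apply, ← hxu]; rfl
      _ ≤ ∑ j, M i j * (c * y j) := (Finset.abs_sum_le_sum_abs _ _).trans <|
          Finset.sum_le_sum fun j _ => by
            rw [abs_mul, abs_of_nonneg (hM i j)]; exact mul_le_mul_of_nonneg_left (hx_le j) (hM i j)
      _ = c * (M *ᵥ y) i := by
          simp only [mulVec, dotProduct, Finset.mul_sum]
          exact Finset.sum_congr rfl fun j _ => by ring
      _ ≤ t * |x i| := by
          rw [hxi, mul_left_comm]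
          exact mul_le_mul_of_nonneg_left (hMy i) hc.le
  exact le_of_mul_le_mul_right this hxi_pos

theorem maxEig_le_of_mulVec_le (hM : ∀ i j, 0 ≤ M i j) {y : V → ℝ} (hy : ∀ i, 0 < y i)
    {t : ℝ} (ht : 0 ≤ t) (hMy : ∀ i, (M *ᵥ y) i ≤ t * y i) : maxEig M ≤ t :=
  Real.sSup_le (fun _ ⟨_, hx, hxu⟩ => (le_abs_self _).trans
    (abs_eigenvalue_le_of_mulVec_le hM hy hMy hx hxu)) ht

theorem le_maxEig_of_mulVec_eq (hM : ∀ i j, 0 ≤ M i j) {t : ℝ} {x : V → ℝ} (hx : x ≠ 0)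
    (hxt : M *ᵥ x = t • x) : t ≤ maxEig M := by
  refine le_csSup ⟨∑ i, ∑ j, M i j, fun u ⟨x, hx, hxu⟩ => (le_abs_self u).trans <|
    abs_eigenvalue_le_of_mulVec_le hM (y := 1) (fun _ => one_pos) (fun i => ?_) hx hxu⟩ ⟨x, hx, hxt⟩
  simpa [mulVec, dotProduct] using
    Finset.single_le_sum (f := fun i => ∑ j, M i j)
      (fun i _ => Finset.sum_nonneg fun j _ => hM i j) (Finset.mem_univ i)

end CollatzWielandt

theorem adjMat_nonneg {V : Type} [Fintype V] (G : SimpleGraph V) (i j : V) :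
    0 ≤ adjMat G i j := by
  unfold adjMat; split <;> norm_num

open Classical in
theorem adjMat_mulVec_apply {V : Type} [Fintype V] (G : SimpleGraph V) (x : V → ℝ) (i : V) :
    (adjMat G *ᵥ x) i = ∑ j, if G.Adj i j then x j else 0 := by
  simp only [mulVec, dotProduct, adjMat, ite_mul, one_mul, zero_mul]

theorem specRad_le_of_mulVec_le {V : Type} [Fintype V] {G : SimpleGraph V} {y : V → ℝ}
    (hy : ∀ i, 0 < y i) {t : ℝ} (ht : 0 ≤ t) (hGy : ∀ i, (adjMat G *ᵥ y) i ≤ t * y i) :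
    specRad G ≤ t :=
  maxEig_le_of_mulVec_le (adjMat_nonneg G) hy ht hGy

theorem le_specRad_of_mulVec_eq {V : Type} [Fintype V] {G : SimpleGraph V} {t : ℝ}
    {x : V → ℝ} (hx : x ≠ 0) (hxt : adjMat G *ᵥ x = t • x) : t ≤ specRad G :=
  le_maxEig_of_mulVec_eq (adjMat_nonneg G) hx hxt

def blockVec (n s a : ℕ) (p q r : ℝ) : Fin n → ℝ :=
  fun j => if (j : ℕ) < s then p else if (j : ℕ) < s + a then q else r

theorem sum_blockVec {n s a : ℕ} (h : s + a ≤ n) (p q r : ℝ) :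
    ∑ j, blockVec n s a p q r j = s * p + a * q + (n - s - a) * r := by
  have hconst : ∀ (l m : ℕ) (c : ℝ) (f : ℕ → ℝ), (∀ j ∈ Finset.Ico l m, f j = c) →
      ∑ j ∈ Finset.Ico l m, f j = (m - l : ℕ) * c := fun l m c f hf => by
    rw [Finset.sum_congr rfl hf, Finset.sum_const, Nat.card_Ico, nsmul_eq_mul]
  unfold blockVec
  rw [Fin.sum_univ_eq_sum_range (fun j => if j < s then p else if j < s + a then q else r),
    ← Nat.Ico_zero_eq_range, ← Finset.sum_Ico_consecutive _ (Nat.zero_le s) (by omega : s ≤ n),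
    ← Finset.sum_Ico_consecutive _ (Nat.le_add_right s a) h,
    hconst 0 s p _ fun j hj => if_pos (Finset.mem_Ico.mp hj).2,
    hconst s (s + a) q _ fun j hj => by
      rw [Finset.mem_Ico] at hj; rw [if_neg (by omega), if_pos hj.2],
    hconst (s + a) n r _ fun j hj => by
      rw [Finset.mem_Ico] at hj; rw [if_neg (by omega), if_neg (by omega)]]
  rw [Nat.sub_zero, Nat.add_sub_cancel_left, Nat.cast_sub h]
  push_cast
  ring

theorem Finset.sum_eq_sum_sub_of_add_ite_eq {ι G : Type*} [Fintype ι] [DecidableEq ι]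
    [AddCommGroup G] {f g : ι → G} (i : ι) (c : G)
    (h : ∀ j, f j + (if j = i then c else 0) = g j) :
    ∑ j, f j = ∑ j, g j - c := by
  simp [← Finset.sum_congr rfl fun j _ => h j, Finset.sum_add_distrib]

theorem adjMat_modelA_mulVec_blockVec {n s a : ℕ} (h : s + a ≤ n) (p q r : ℝ) (i : Fin n) :
    (adjMat (modelA n s a) *ᵥ blockVec n s a p q r) i =
      if (i : ℕ) < s then (s - 1) * p + a * q + (n - s - a) * r
      else if (i : ℕ) < s + a then s * p
      else s * p + (n - s - a - 1) * r := by
  classical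
  -- each row of the product is the sum of another block vector, corrected by a diagonal term
  have row : ∀ p' q' r' c : ℝ, (∀ j, (if (modelA n s a).Adj i j then blockVec n s a p q r j
      else 0) + (if j = i then c else 0) = blockVec n s a p' q' r' j) →
      (adjMat (modelA n s a) *ᵥ blockVec n s a p q r) i = s * p' + a * q' + (n - s - a) * r' - c :=
    fun p' q' r' c hrow => by
      rw [adjMat_mulVec_apply, Finset.sum_eq_sum_sub_of_add_ite_eq i c hrow, sum_blockVec h]
  split_ifs with hs hsa <;> [rw [row p q r p]; rw [row p 0 0 0]; rw [row p 0 r r]] <;>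
  first
    | ring1
    | intro j
      simp only [modelA, blockVec, ne_eq, Fin.ext_iff]
      split_ifs <;> first | ring1 | omega

theorem specRad_modelA_le {n s a : ℕ} (hs : 0 < s) (hn : 3 < n) (hsa : 2 < s + a)
    (h : s + a ≤ n) (hkey : (a * s * (s + a - 2) : ℝ) ≤ (a - 2) * (n - 2) * (n - 3)) :
    specRad (modelA n s a) ≤ n - 3 := by
  have hs' : (0 : ℝ) < s := by exact_mod_cast hs
  have hn' : (0 : ℝ) < n - 3 := by
    rw [sub_pos]; exact_mod_cast hn
  have hsa' : (0 : ℝ) < s + a - 2 := by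
    rw [sub_pos]; exact_mod_cast hsa
  -- the test vector makes the rows of the independent block and of the far clique tight
  refine specRad_le_of_mulVec_le (y := blockVec n s a ((s + a - 2) / s) ((s + a - 2) / (n - 3)) 1)
    (fun i => by unfold blockVec; split_ifs <;> positivity) hn'.le fun i => ?_
  rw [adjMat_modelA_mulVec_blockVec h]
  unfold blockVec
  split_ifs
  · rw [← sub_nonneg]
    have : (n - 3 : ℝ) * ((s + a - 2) / s) - ((s - 1) * ((s + a - 2) / s) +
        a * ((s + a - 2) / (n - 3)) + (n - s - a) * 1) =
        ((a - 2) * (n - 2) * (n - 3) - a * s * (s + a - 2)) / (s * (n - 3)) := by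
      field_simp
      ring
    rw [this]
    exact div_nonneg (by linarith) (by positivity)
  · exact le_of_eq (by field_simp)
  · exact le_of_eq (by field_simp; ring)

theorem le_specRad_modelA_two_two {n : ℕ} (hn : 5 ≤ n) :
    (n : ℝ) - 3 ≤ specRad (modelA n 2 2) := by
  have hn' : (5 : ℝ) ≤ n := by exact_mod_cast hn
  -- For an eigenvector `blockVec n 2 2 p (2 * p / t) 1`, the rows of the last block force
  -- `p = (t - (n - 5)) / 2`, and the rows of the first block then say that `f t = 0`.
  let f : ℝ → ℝ := fun t => t * (1 - t) * (t - (n - 5)) + 4 * (t - (n - 5)) + 2 * t * (n - 4)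
  obtain ⟨t, ht, hft⟩ : ∃ t ∈ Set.Icc ((n : ℝ) - 3) (n - 2), f t = 0 := by
    refine intermediate_value_Icc' (by linarith) (by fun_prop) ⟨?_, ?_⟩ <;>
      simp only [f] <;> nlinarith
  have ht0 : t ≠ 0 := by linarith [ht.1]
  set p := (t - (n - 5)) / 2
  have heig : adjMat (modelA n 2 2) *ᵥ blockVec n 2 2 p (2 * p / t) 1 =
      t • blockVec n 2 2 p (2 * p / t) 1 := by
    funext i
    rw [Pi.smul_apply, smul_eq_mul, adjMat_modelA_mulVec_blockVec (by omega)]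
    unfold blockVec
    split_ifs
    · field_simp
      linear_combination hft / 2
    · push_cast; field_simp
    · push_cast; ring
  have hne : blockVec n 2 2 p (2 * p / t) 1 ≠ 0 := fun h0 => by
    have := congr_fun h0 ⟨0, by omega⟩
    norm_num [blockVec, p] at this
    linarith [ht.1]
  exact ht.1.trans (le_specRad_of_mulVec_eq hne heig)

theorem modelA_test_vector_inequality {k s n a : ℤ} (hk : 2 ≤ k) (hs : 3 ≤ s) (hn : k + 7 ≤ n)
    (ha : a = k * (s - 2) + 2) (h : s + a ≤ n) :
    a * s * (s + a - 2) ≤ (a - 2) * (n - 2) * (n - 3) := by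
  subst ha
  -- `(n - 2) (n - 3)` is smallest at `n = s + a`, where for `s ≥ 4` the claim reduces to
  -- `2 s ≤ (a - 2) (a - 3)`; for `s = 3` this fails when `k = 2`, and `n ≥ k + 7` is used instead.
  rcases hs.eq_or_lt with rfl | hs4
  · have hn2 : (k + 5) * (k + 4) ≤ (n - 2) * (n - 3) :=
      mul_le_mul (by linarith) (by linarith) (by linarith) (by linarith)
    have hk0 : 0 ≤ k - 2 := by linarith
    nlinarith [mul_le_mul_of_nonneg_left hn2 (by linarith : 0 ≤ k), mul_nonneg hk0 hk0,
      mul_nonneg (mul_nonneg hk0 hk0) hk0]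
  have hfac : 2 * s ≤ k * (s - 2) * (k * (s - 2) - 1) :=
    calc 2 * s ≤ (2 * (s - 2)) * 3 := by linarith
      _ ≤ k * (s - 2) * (k * (s - 2) - 1) := by
        gcongr <;> nlinarith
  have hmono : (s + k * (s - 2)) * (s + k * (s - 2) - 1) ≤ (n - 2) * (n - 3) :=
    mul_le_mul (by linarith) (by linarith) (by nlinarith) (by linarith)
  nlinarith [mul_le_mul_of_nonneg_left hmono (by nlinarith : 0 ≤ k * (s - 2)),
    mul_le_mul_of_nonneg_left hfac (by nlinarith : 0 ≤ s + k * (s - 2))]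

theorem stmt_12_general (n s k : ℕ) (hk : 2 ≤ k)
    (h1 : k + 7 ≤ n) (h2 : (k + 1) * s + 2 ≤ n + 2 * k) (hs2 : 2 < s) :
    specRad (modelA n s (k * s - 2 * k + 2)) ≤ specRad (modelA n 2 2) := by
  have hks : 2 * k ≤ k * s := by nlinarith
  have ha : ((k * s - 2 * k + 2 : ℕ) : ℤ) = k * (s - 2) + 2 := by push_cast [hks]; ring
  have hsa : s + (k * s - 2 * k + 2) ≤ n := by zify [hks] at h2 ⊢; linarith
  refine (specRad_modelA_le (by omega) (by omega) (by omega) hsa ?_).trans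
    (le_specRad_modelA_two_two (by omega))
  exact_mod_cast modelA_test_vector_inequality (n := n) (by omega) (by omega) (by omega) ha
    (by omega)

/-- Lemma: for `k ≥ 2`, `n ≥ k + 7`, `n ≥ (k+1)s - 2k + 2` and `s > 2`,
`ρ(K_s ∨ ((ks-2k+2)K_1 ∪ K_{n-(k+1)s+2k-2})) ≤ ρ(K_2 ∨ (2K_1 ∪ K_{n-4}))`. -/
theorem stmt_12 (n s k : ℕ) (hk : 2 ≤ k) (hs : 2 ≤ s)
    (h1 : k + 7 ≤ n) (h2 : (k + 1) * s + 2 ≤ n + 2 * k) (hs2 : 2 < s) :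
    specRad (modelA n s (k * s - 2 * k + 2)) ≤ specRad (modelA n 2 2) :=
  stmt_12_general n s k hk h1 h2 hs2
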